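/- arXiv:math/0508507 — 4 statements merged into one kernel-verified Lean document; each statement's English description precedes it below -/
import Mathlib

section
/- In the tree on G = ⋃_n G_n induced by the predecessor homomorphisms p : G_{n+1} → G_n, a nonempty element a ∈ G_n (a ≠ id_n) has ordinal tree rank equal to the minimum of the tree ranks (in T) of its members: rk(a) = min{ rk(t) : t ∈ a }. -/
open scoped symmDiff

/-- `RankGE succ o x` means the tree rank of `x` (w.r.t. successor relation `succ`)
is at least `o`; unranked nodes (`rk = ∞`) satisfy this for every ordinal. -/
def RankGE {α : Type*} (succ : α → α → Prop) (o : Ordinal) (x : α) : Prop :=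
  ∀ β < o, ∃ y, succ x y ∧ RankGE succ β y
termination_by o

/-- `T` is a subtree of `ω^{<ω}`: closed under initial segments. -/
def IsTree (T : Set (List ℕ)) : Prop := ∀ s t : List ℕ, s <+: t → t ∈ T → s ∈ T

/-- `τ` is an immediate successor of `σ` in `T`. -/
def TSucc (T : Set (List ℕ)) (σ τ : List ℕ) : Prop := τ ∈ T ∧ ∃ k : ℕ, τ = σ ++ [k]

instance : Std.Commutative (α := Finset (List ℕ)) (· ∆ ·) := ⟨fun a b => symmDiff_comm a b⟩
instance : Std.Associative (α := Finset (List ℕ)) (· ∆ ·) := ⟨fun a b c => symmDiff_assoc a b c⟩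

/-- The predecessor map: the symmetric-difference sum of the singletons of the
`T`-predecessors of the members of `a`. -/
def pmap (a : Finset (List ℕ)) : Finset (List ℕ) :=
  Finset.fold (· ∆ ·) ∅ (fun t => {t.dropLast}) a

/-- The carrier `G = ⋃ₙ Gₙ`: an element of `Gₙ` is a pair `(n, a)` with `a` a finite
subset of the level-`n` nodes of `T`; `(n, ∅)` is the identity `idₙ` of `Gₙ`. -/
def Gset (T : Set (List ℕ)) : Set (ℕ × Finset (List ℕ)) :=
  {x | ∀ t ∈ x.2, t ∈ T ∧ t.length = x.1}

/-- The derived tree structure on `G`: `y ∈ G_{n+1}` is a successor of `x ∈ Gₙ` iff `p y = x`. -/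
def Gsucc (T : Set (List ℕ)) (x y : ℕ × Finset (List ℕ)) : Prop :=
  y ∈ Gset T ∧ y.1 = x.1 + 1 ∧ pmap y.2 = x.2

lemma rankGE_iff {α : Type*} (succ : α → α → Prop) (o : Ordinal) (x : α) :
    RankGE succ o x ↔ ∀ β < o, ∃ y, succ x y ∧ RankGE succ β y := by
  rw [RankGE]

lemma pmap_insert (s : List ℕ) (b : Finset (List ℕ)) (h : s ∉ b) :
    pmap (insert s b) = {s.dropLast} ∆ pmap b :=
  Finset.fold_insert h

lemma mem_pmap {b : Finset (List ℕ)} {t : List ℕ} (h : t ∈ pmap b) :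
    ∃ s ∈ b, s.dropLast = t := by
  induction b using Finset.induction with
  | empty => simp [pmap] at h
  | @insert s b hs ih =>
    rw [pmap_insert _ _ hs, Finset.mem_symmDiff] at h
    rcases h with ⟨h1, _⟩ | ⟨h1, _⟩
    · exact ⟨s, Finset.mem_insert_self _ _, (Finset.mem_singleton.1 h1).symm⟩
    · obtain ⟨s', hs', he⟩ := ih h1
      exact ⟨s', Finset.mem_insert_of_mem hs', he⟩

lemma pmap_image (a : Finset (List ℕ)) (f : List ℕ → List ℕ)
    (hf : ∀ t ∈ a, (f t).dropLast = t) : pmap (a.image f) = a := by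
  induction a using Finset.induction with
  | empty => simp [pmap]
  | @insert t a ht ih =>
    have hft : f t ∉ a.image f := by
      intro h
      obtain ⟨t', ht', he⟩ := Finset.mem_image.1 h
      have h1 := hf t' (Finset.mem_insert_of_mem ht')
      have h2 := hf t (Finset.mem_insert_self _ _)
      rw [he] at h1
      rw [h1] at h2
      exact ht (h2 ▸ ht')
    rw [Finset.image_insert, pmap_insert _ _ hft,
      ih (fun t' h => hf t' (Finset.mem_insert_of_mem h)),
      hf t (Finset.mem_insert_self _ _)]
    ext x
    simp only [Finset.mem_symmDiff, Finset.mem_singleton, Finset.mem_insert]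
    constructor
    · rintro (⟨rfl, -⟩ | ⟨h1, -⟩)
      · exact Or.inl rfl
      · exact Or.inr h1
    · rintro (rfl | h)
      · exact Or.inl ⟨rfl, ht⟩
      · exact Or.inr ⟨h, fun he => ht (he ▸ h)⟩

lemma main_lemma (T : Set (List ℕ)) :
    ∀ β : Ordinal, ∀ n : ℕ, ∀ a : Finset (List ℕ), a.Nonempty →
      ((n, a) : ℕ × Finset (List ℕ)) ∈ Gset T →
      (RankGE (Gsucc T) β (n, a) ↔ ∀ t ∈ a, RankGE (TSucc T) β t) := by
  intro β
  induction β using Ordinal.induction with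
  | h β IH =>
  intro n a hne ha
  constructor
  · intro H t ht
    rw [rankGE_iff]
    intro γ hγ
    obtain ⟨y, hy, hry⟩ := (rankGE_iff _ _ _).1 H γ hγ
    obtain ⟨m, b⟩ := y
    obtain ⟨hbG, hm, hpb⟩ := hy
    simp only at hm hpb
    subst hm
    have htb : t ∈ pmap b := hpb ▸ ht
    obtain ⟨s, hsb, hst⟩ := mem_pmap htb
    have hsT := hbG s hsb
    have hsne : s ≠ [] := by
      intro h; rw [h] at hsT; simp at hsT
    refine ⟨s, ⟨hsT.1, s.getLast hsne, ?_⟩, ?_⟩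
    · rw [← hst]; exact (List.dropLast_append_getLast hsne).symm
    · exact (IH γ hγ (n + 1) b ⟨s, hsb⟩ hbG).1 hry s hsb
  · intro H
    rw [rankGE_iff]
    intro γ hγ
    have hch : ∀ t : List ℕ, ∃ s, t ∈ a → TSucc T t s ∧ RankGE (TSucc T) γ s := by
      intro t
      by_cases ht : t ∈ a
      · obtain ⟨s, hs1, hs2⟩ := (rankGE_iff _ _ _).1 (H t ht) γ hγ
        exact ⟨s, fun _ => ⟨hs1, hs2⟩⟩
      · exact ⟨[], fun h => absurd h ht⟩
    choose f hf using hch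
    have hdrop : ∀ t ∈ a, (f t).dropLast = t := by
      intro t ht
      obtain ⟨-, k, hk⟩ := (hf t ht).1
      rw [hk, List.dropLast_concat]
    refine ⟨(n + 1, a.image f), ⟨?_, rfl, pmap_image a f hdrop⟩, ?_⟩
    · intro s hs
      obtain ⟨t, ht, rfl⟩ := Finset.mem_image.1 hs
      obtain ⟨hT1, k, hk⟩ := (hf t ht).1
      refine ⟨hT1, ?_⟩
      rw [hk]
      simp [(ha t ht).2]
    · refine (IH γ hγ (n + 1) (a.image f) (hne.image f) ?_).2 ?_
      · intro s hs
        obtain ⟨t, ht, rfl⟩ := Finset.mem_image.1 hs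
        obtain ⟨hT1, k, hk⟩ := (hf t ht).1
        exact ⟨hT1, by rw [hk]; simp [(ha t ht).2]⟩
      · intro s hs
        obtain ⟨t, ht, rfl⟩ := Finset.mem_image.1 hs
        exact (hf t ht).2

theorem stmt_5 (T : Set (List ℕ)) (hT : IsTree T) (n : ℕ) (a : Finset (List ℕ))
    (hne : a.Nonempty) (ha : ((n, a) : ℕ × Finset (List ℕ)) ∈ Gset T) :
    ∀ β : Ordinal, RankGE (Gsucc T) β (n, a) ↔ ∀ t ∈ a, RankGE (TSucc T) β t := by
  intro β
  exact main_lemma T β n a hne ha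
end

section
/- If T ⊆ ω^{<ω} has an infinite path (t_n)_{n∈ω} with t_n ∈ T_n, then the map g : G → G defined by g(a) = f_a({t_n}) for a ∈ G_n is a non-trivial automorphism of A(T) sending id_n to {t_n}. -/
open scoped symmDiff

/-- The operations `f_a`: `fA a b = a* ∆ b*` where `a*`, `b*` are the iterated
predecessors of `a`, `b` down to the minimum of their levels. -/
def fA (x y : ℕ × Finset (List ℕ)) : ℕ × Finset (List ℕ) :=
  (min x.1 y.1, (pmap^[x.1 - min x.1 y.1] x.2) ∆ (pmap^[y.1 - min x.1 y.1] y.2))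

/-- An automorphism of the structure `A(T) = (G, (f_a)_{a ∈ G})`: a bijection of `G`
commuting with each of the named unary operations `f_a`. -/
def IsAuto (T : Set (List ℕ)) (g : ℕ × Finset (List ℕ) → ℕ × Finset (List ℕ)) : Prop :=
  Set.BijOn g (Gset T) (Gset T) ∧ ∀ a ∈ Gset T, ∀ b ∈ Gset T, g (fA a b) = fA a (g b)

/-!
Write `bₙ` for the level-`n` node of the path. Since `f_a` takes a level-`n` element `x` and the
singleton `{bₙ}` to `x ∆ {bₙ}`, the map `g` toggles `bₙ` in each `x ∈ Gₙ`; it is therefore an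
involution of `G`. It commutes with every `f_a` because the predecessor map `p` is additive for
`∆` and sends `{bₙ₊₁}` to `{bₙ}`, so that toggling `bₘ` before going down to a lower level `k`
is the same as toggling `bₖ` afterwards.
-/

lemma pmap_union_symmDiff_pmap_inter (a b : Finset (List ℕ)) :
    pmap (a ∪ b) ∆ pmap (a ∩ b) = pmap a ∆ pmap b :=
  Finset.fold_union_inter

lemma pmap_union_of_disjoint {a b : Finset (List ℕ)} (h : Disjoint a b) :
    pmap (a ∪ b) = pmap a ∆ pmap b := by
  have hempty : (∅ : Finset (List ℕ)) = ∅ ∆ ∅ := by simp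
  rw [← Finset.disjUnion_eq_union _ _ h, pmap]
  conv_lhs => rw [hempty]
  exact Finset.fold_disjUnion h

lemma pmap_symmDiff (a b : Finset (List ℕ)) : pmap (a ∆ b) = pmap a ∆ pmap b := by
  have hunion : pmap (a ∪ b) = pmap (a ∆ b) ∆ pmap (a ∩ b) := by
    have hsplit : a ∆ b ∪ a ∩ b = a ∪ b := symmDiff_sup_inf a b
    rw [← hsplit]
    exact pmap_union_of_disjoint (disjoint_symmDiff_inf a b)
  rw [← pmap_union_symmDiff_pmap_inter, hunion, symmDiff_symmDiff_cancel_right]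

lemma pmap_iterate_symmDiff (j : ℕ) (a b : Finset (List ℕ)) :
    pmap^[j] (a ∆ b) = pmap^[j] a ∆ pmap^[j] b := by
  induction j generalizing a b with
  | zero => rfl
  | succ j ih => simp only [Function.iterate_succ_apply, pmap_symmDiff, ih]

lemma pmap_singleton (t : List ℕ) : pmap {t} = {t.dropLast} := by
  simp [pmap]

abbrev branchNode (f : ℕ → ℕ) (n : ℕ) : List ℕ := List.ofFn fun i : Fin n => f i

lemma branchNode_succ_dropLast (f : ℕ → ℕ) (n : ℕ) :
    (branchNode f (n + 1)).dropLast = branchNode f n := by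
  rw [branchNode, List.ofFn_succ']
  simp [List.concat_eq_append]

lemma pmap_iterate_branchNode (f : ℕ → ℕ) {k n : ℕ} (hkn : k ≤ n) :
    pmap^[n - k] {branchNode f n} = {branchNode f k} := by
  obtain ⟨j, rfl⟩ := Nat.exists_eq_add_of_le hkn
  rw [Nat.add_sub_cancel_left]
  clear hkn
  induction j with
  | zero => rfl
  | succ j ih =>
    rw [Function.iterate_succ_apply, ← add_assoc, pmap_singleton, branchNode_succ_dropLast, ih]

def toggleBranch (f : ℕ → ℕ) (x : ℕ × Finset (List ℕ)) : ℕ × Finset (List ℕ) :=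
  (x.1, x.2 ∆ {branchNode f x.1})

lemma fA_branchNode (f : ℕ → ℕ) (x : ℕ × Finset (List ℕ)) :
    fA x (x.1, {branchNode f x.1}) = toggleBranch f x := by
  simp [fA, toggleBranch]

lemma toggleBranch_involutive (f : ℕ → ℕ) : Function.Involutive (toggleBranch f) := by
  intro x
  simp [toggleBranch, symmDiff_symmDiff_cancel_right]

lemma mapsTo_toggleBranch {T : Set (List ℕ)} {f : ℕ → ℕ} (hf : ∀ n, branchNode f n ∈ T) :
    Set.MapsTo (toggleBranch f) (Gset T) (Gset T) := by
  rintro x hx t ht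
  rcases Finset.mem_symmDiff.mp ht with ⟨htx, -⟩ | ⟨htb, -⟩
  · exact hx t htx
  · rw [Finset.mem_singleton.mp htb]
    exact ⟨hf x.1, List.length_ofFn⟩

lemma toggleBranch_fA (f : ℕ → ℕ) (a b : ℕ × Finset (List ℕ)) :
    toggleBranch f (fA a b) = fA a (toggleBranch f b) := by
  simp only [fA, toggleBranch, pmap_iterate_symmDiff,
    pmap_iterate_branchNode f (min_le_right a.1 b.1), symmDiff_assoc]

lemma isAuto_toggleBranch {T : Set (List ℕ)} {f : ℕ → ℕ} (hf : ∀ n, branchNode f n ∈ T) :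
    IsAuto T (toggleBranch f) :=
  have hinv := toggleBranch_involutive f
  ⟨Set.InvOn.bijOn ⟨fun x _ => hinv x, fun x _ => hinv x⟩ (mapsTo_toggleBranch hf)
      (mapsTo_toggleBranch hf),
    fun a _ b _ => toggleBranch_fA f a b⟩

theorem stmt_9_general (T : Set (List ℕ)) (f : ℕ → ℕ)
    (hf : ∀ n, List.ofFn (fun i : Fin n => f i) ∈ T)
    (g : ℕ × Finset (List ℕ) → ℕ × Finset (List ℕ))
    (hg : ∀ x, g x = fA x (x.1, {List.ofFn (fun i : Fin x.1 => f i)})) :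
    IsAuto T g ∧ (∀ n : ℕ, g (n, ∅) = (n, {List.ofFn (fun i : Fin n => f i)})) ∧
      ∃ x ∈ Gset T, g x ≠ x := by
  have hg_eq : g = toggleBranch f := funext fun x => (hg x).trans (fA_branchNode f x)
  subst hg_eq
  refine ⟨isAuto_toggleBranch hf, fun n => by simp [toggleBranch], (0, ∅), ?_, ?_⟩
  · simp [Gset]
  · simp [toggleBranch]

theorem stmt_9 (T : Set (List ℕ)) (hT : IsTree T) (f : ℕ → ℕ)
    (hf : ∀ n, List.ofFn (fun i : Fin n => f i) ∈ T)
    (g : ℕ × Finset (List ℕ) → ℕ × Finset (List ℕ))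
    (hg : ∀ x, g x = fA x (x.1, {List.ofFn (fun i : Fin x.1 => f i)})) :
    IsAuto T g ∧ (∀ n : ℕ, g (n, ∅) = (n, {List.ofFn (fun i : Fin n => f i)})) ∧
      ∃ x ∈ Gset T, g x ≠ x :=
  stmt_9_general T f hf g hg
end

section
/- In A(T), if ā and b̄ are tuples with ā ≡^0 b̄, n is greatest such that some a_i ∈ G_n, and g = f_{a_i}(b_i), then for every ordinal β the following are equivalent: (1) ā ≡^β b̄; (2) ā,id_n ≡^β b̄,g; (3) id_n ≡^β g. -/
open scoped symmDiff

abbrev GP := ℕ × Finset (List ℕ)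

/-- Terms of the language of `A(T)`: variables and applications of the unary symbols `f_a`. -/
inductive ATerm : Type where
  | var : ℕ → ATerm
  | app : GP → ATerm → ATerm

def ATerm.eval (ρ : ℕ → GP) : ATerm → GP
  | .var i => ρ i
  | .app a t => fA a (ATerm.eval ρ t)

/-- A term is `ok` if its variables are among `x₀, …, x_{k-1}` and its symbols come from `G`. -/
def ATerm.ok (T : Set (List ℕ)) (k : ℕ) : ATerm → Prop
  | .var i => i < k
  | .app a t => a ∈ Gset T ∧ ATerm.ok T k t

def env {k : ℕ} (a : Fin k → GP) : ℕ → GP := fun i => if h : i < k then a ⟨i, h⟩ else (0, ∅)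

/-- `≡⁰`: the tuples satisfy the same quantifier-free formulas. -/
def eqQF (T : Set (List ℕ)) (k : ℕ) (a b : Fin k → GP) : Prop :=
  ∀ t₁ t₂ : ATerm, ATerm.ok T k t₁ → ATerm.ok T k t₂ →
    (ATerm.eval (env a) t₁ = ATerm.eval (env a) t₂ ↔ ATerm.eval (env b) t₁ = ATerm.eval (env b) t₂)

/-- The standard back-and-forth equivalences `≡^β` on tuples of `A(T)`. -/
def BF (T : Set (List ℕ)) (β : Ordinal) (k : ℕ) (a b : Fin k → GP) : Prop :=
  if β = 0 then eqQF T k a b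
  else ∀ γ < β,
    (∀ c ∈ Gset T, ∃ d ∈ Gset T, BF T γ (k + 1) (Fin.snoc a c) (Fin.snoc b d)) ∧
    (∀ d ∈ Gset T, ∃ c ∈ Gset T, BF T γ (k + 1) (Fin.snoc a c) (Fin.snoc b d))
termination_by β

/-- `b̄` lies in the automorphism orbit of `ā`. -/
def InOrbit (T : Set (List ℕ)) {k : ℕ} (a b : Fin k → GP) : Prop :=
  ∃ g, IsAuto T g ∧ ∀ i, g (a i) = b i

/-- Scott rank of a tuple: the least `β` such that `≡^β`-equivalence to the tuple
implies membership in its orbit. -/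
noncomputable def SR (T : Set (List ℕ)) {k : ℕ} (a : Fin k → GP) : Ordinal :=
  sInf {β : Ordinal | ∀ b : Fin k → GP, (∀ i, b i ∈ Gset T) → BF T β k a b → InOrbit T a b}

section Aux

variable {T : Set (List ℕ)}

lemma ok_mono {k k' : ℕ} (h : k ≤ k') : ∀ {t : ATerm}, t.ok T k → t.ok T k'
  | .var _, hi => lt_of_lt_of_le hi h
  | .app _ t, ⟨ha, ht⟩ => ⟨ha, ok_mono h ht⟩

lemma eval_congr {e e' : ℕ → GP} {k : ℕ} :
    ∀ {t : ATerm}, t.ok T k → (∀ i < k, e i = e' i) → ATerm.eval e t = ATerm.eval e' t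
  | .var i, hi, h => h i hi
  | .app _ t, ⟨_, ht⟩, h => by
      simp only [ATerm.eval]
      rw [eval_congr ht h]

def tsubst (ρ : ℕ → ATerm) : ATerm → ATerm
  | .var i => ρ i
  | .app a t => .app a (tsubst ρ t)

lemma eval_tsubst (e : ℕ → GP) (ρ : ℕ → ATerm) :
    ∀ t, ATerm.eval e (tsubst ρ t) = ATerm.eval (fun i => ATerm.eval e (ρ i)) t
  | .var _ => rfl
  | .app a t => by simp only [tsubst, ATerm.eval, eval_tsubst]

lemma ok_tsubst {k k' : ℕ} {ρ : ℕ → ATerm} (hρ : ∀ i < k, (ρ i).ok T k') :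
    ∀ {t : ATerm}, t.ok T k → (tsubst ρ t).ok T k'
  | .var i, hi => hρ i hi
  | .app _ t, ⟨ha, ht⟩ => ⟨ha, ok_tsubst hρ ht⟩

lemma env_lt {k : ℕ} (a : Fin k → GP) {i : ℕ} (h : i < k) : env a i = a ⟨i, h⟩ := dif_pos h

lemma env_snoc_lt {k : ℕ} (a : Fin k → GP) (c : GP) {i : ℕ} (h : i < k) :
    env (Fin.snoc a c) i = env a i := by
  rw [env_lt _ (h.trans (Nat.lt_succ_self k)), env_lt _ h]
  have e : (⟨i, h.trans (Nat.lt_succ_self k)⟩ : Fin (k + 1)) = Fin.castSucc ⟨i, h⟩ := rfl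
  rw [e, Fin.snoc_castSucc]

lemma env_snoc_last {k : ℕ} (a : Fin k → GP) (c : GP) : env (Fin.snoc a c) k = c := by
  rw [env_lt _ (Nat.lt_succ_self k)]
  have e : (⟨k, Nat.lt_succ_self k⟩ : Fin (k + 1)) = Fin.last k := rfl
  rw [e, Fin.snoc_last]

lemma eqQF_map {k k' : ℕ} (σ : Fin k' → ATerm) (hσ : ∀ j, (σ j).ok T k)
    {a b : Fin k → GP} (h : eqQF T k a b) :
    eqQF T k' (fun j => ATerm.eval (env a) (σ j)) (fun j => ATerm.eval (env b) (σ j)) := by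
  intro t1 t2 h1 h2
  set ρ : ℕ → ATerm := fun i => if h : i < k' then σ ⟨i, h⟩ else .var 0 with hρ
  have hρok : ∀ i < k', (ρ i).ok T k := by
    intro i hi; simp only [hρ, dif_pos hi]; exact hσ _
  have key : ∀ (x : Fin k → GP) t, ATerm.ok T k' t →
      ATerm.eval (env (fun j => ATerm.eval (env x) (σ j))) t = ATerm.eval (env x) (tsubst ρ t) := by
    intro x t ht
    rw [eval_tsubst]
    refine eval_congr ht ?_
    intro i hi
    rw [env_lt _ hi]
    simp only [hρ, dif_pos hi]
  rw [key a t1 h1, key a t2 h2, key b t1 h1, key b t2 h2]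
  exact h _ _ (ok_tsubst hρok h1) (ok_tsubst hρok h2)

lemma snoc_ok {k k' : ℕ} (σ : Fin k' → ATerm) (hσ : ∀ j, (σ j).ok T k) :
    ∀ j, ((Fin.snoc σ (ATerm.var k) : Fin (k' + 1) → ATerm) j).ok T (k + 1) := by
  refine Fin.lastCases ?_ ?_
  · rw [Fin.snoc_last]; exact Nat.lt_succ_self k
  · intro j; rw [Fin.snoc_castSucc]; exact ok_mono (Nat.le_succ k) (hσ j)

lemma snoc_eval_eq {k k' : ℕ} (σ : Fin k' → ATerm) (hσ : ∀ j, (σ j).ok T k)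
    (a : Fin k → GP) (c : GP) :
    (fun j => ATerm.eval (env (Fin.snoc a c)) ((Fin.snoc σ (ATerm.var k) : Fin (k' + 1) → ATerm) j)) =
      Fin.snoc (fun j => ATerm.eval (env a) (σ j)) c := by
  funext j
  refine Fin.lastCases ?_ ?_ j
  · rw [Fin.snoc_last, Fin.snoc_last]
    exact env_snoc_last a c
  · intro j
    rw [Fin.snoc_castSucc, Fin.snoc_castSucc]
    exact eval_congr (hσ j) (fun i hi => env_snoc_lt a c hi)

lemma BF_map (T : Set (List ℕ)) (β : Ordinal) : ∀ (k k' : ℕ) (σ : Fin k' → ATerm),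
    (∀ j, (σ j).ok T k) → ∀ (a b : Fin k → GP), BF T β k a b →
    BF T β k' (fun j => ATerm.eval (env a) (σ j)) (fun j => ATerm.eval (env b) (σ j)) := by
  induction β using Ordinal.induction with
  | _ β IH =>
  intro k k' σ hσ a b hab
  by_cases hβ : β = 0
  · subst hβ
    rw [BF, if_pos rfl] at hab ⊢
    exact eqQF_map σ hσ hab
  · rw [BF, if_neg hβ] at hab ⊢
    intro γ hγ
    constructor
    · intro c hc
      obtain ⟨d, hd, h⟩ := (hab γ hγ).1 c hc
      refine ⟨d, hd, ?_⟩
      have h2 := IH γ hγ (k + 1) (k' + 1) (Fin.snoc σ (ATerm.var k)) (snoc_ok σ hσ)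
        (Fin.snoc a c) (Fin.snoc b d) h
      rwa [snoc_eval_eq σ hσ, snoc_eval_eq σ hσ] at h2
    · intro d hd
      obtain ⟨c, hc, h⟩ := (hab γ hγ).2 d hd
      refine ⟨c, hc, ?_⟩
      have h2 := IH γ hγ (k + 1) (k' + 1) (Fin.snoc σ (ATerm.var k)) (snoc_ok σ hσ)
        (Fin.snoc a c) (Fin.snoc b d) h
      rwa [snoc_eval_eq σ hσ, snoc_eval_eq σ hσ] at h2

lemma pmap_empty : pmap ∅ = ∅ := rfl

lemma fA_self (x : GP) : fA x x = (x.1, ∅) := by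
  simp [fA, symmDiff_self]

lemma fA_id {x : GP} {n : ℕ} (h : x.1 ≤ n) : fA x (n, ∅) = x := by
  have e : x.2 ∆ (∅ : Finset (List ℕ)) = x.2 := symmDiff_bot x.2
  simp [fA, min_eq_left h, Function.iterate_fixed pmap_empty, e]

end Aux
theorem stmt_13 (T : Set (List ℕ)) (hT : IsTree T) (k : ℕ) (a b : Fin k → GP)
    (haG : ∀ i, a i ∈ Gset T) (hbG : ∀ i, b i ∈ Gset T) (h0 : eqQF T k a b)
    (n : ℕ) (i : Fin k) (hi : (a i).1 = n) (hmax : ∀ j, (a j).1 ≤ n)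
    (g : GP) (hg : g = fA (a i) (b i)) :
    ∀ β : Ordinal,
      (BF T β k a b ↔ BF T β (k + 1) (Fin.snoc a (n, ∅)) (Fin.snoc b g)) ∧
      (BF T β k a b ↔ BF T β 1 ![((n, ∅) : GP)] ![g]) := by
  subst hg
  have haa : fA (a i) (a i) = ((n : ℕ), (∅ : Finset (List ℕ))) := by rw [fA_self, hi]
  have hfix : ∀ j, fA (a j) (n, ∅) = a j := fun j => fA_id (hmax j)
  have envA : ∀ j : Fin k, env a (j : ℕ) = a j := fun j => by
    rw [env_lt _ j.isLt]
  have envB : ∀ j : Fin k, env b (j : ℕ) = b j := fun j => by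
    rw [env_lt _ j.isLt]
  have hbj : ∀ j, fA (a j) (fA (a i) (b i)) = b j := by
    intro j
    have ok1 : (ATerm.app (a j) (ATerm.app (a i) (ATerm.var (i : ℕ)))).ok T k :=
      ⟨haG j, haG i, i.isLt⟩
    have ok2 : (ATerm.var (j : ℕ)).ok T k := j.isLt
    have hA : ATerm.eval (env a) (.app (a j) (.app (a i) (.var (i : ℕ)))) =
        ATerm.eval (env a) (.var (j : ℕ)) := by
      simp only [ATerm.eval, envA, haa, hfix]
    have hB := (h0 _ _ ok1 ok2).mp hA
    simpa only [ATerm.eval, envB] using hB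
  -- σ1 : from k variables, defines the (k+1)-tuples
  set σ1 : Fin (k + 1) → ATerm :=
    (Fin.snoc (fun j : Fin k => ATerm.var (j : ℕ)) (ATerm.app (a i) (ATerm.var (i : ℕ)))) with hσ1
  have σ1ok : ∀ j, (σ1 j).ok T k := by
    refine Fin.lastCases ?_ ?_
    · rw [hσ1, Fin.snoc_last]; exact ⟨haG i, i.isLt⟩
    · intro j; rw [hσ1, Fin.snoc_castSucc]; exact j.isLt
  have σ1eval : ∀ (x : Fin k → GP) (v : GP), fA (a i) (x i) = v →
      (fun j => ATerm.eval (env x) (σ1 j)) = Fin.snoc x v := by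
    intro x v hv
    funext j
    refine Fin.lastCases ?_ ?_ j
    · rw [hσ1, Fin.snoc_last, Fin.snoc_last]
      show fA (a i) (ATerm.eval (env x) (.var (i : ℕ))) = v
      rw [ATerm.eval, env_lt _ i.isLt]
      simpa using hv
    · intro j
      rw [hσ1, Fin.snoc_castSucc, Fin.snoc_castSucc]
      show env x (j : ℕ) = x j
      rw [env_lt _ j.isLt]
  -- σ2 : from k+1 variables, recovers the k-tuples
  have σ2ok : ∀ j : Fin k, (ATerm.var (j : ℕ)).ok T (k + 1) :=
    fun j => j.isLt.trans (Nat.lt_succ_self k)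
  have σ2eval : ∀ (x : Fin k → GP) (v : GP),
      (fun j : Fin k => ATerm.eval (env (Fin.snoc x v)) (ATerm.var (j : ℕ))) = x := by
    intro x v
    funext j
    show env (Fin.snoc x v) (j : ℕ) = x j
    rw [env_snoc_lt x v j.isLt, env_lt _ j.isLt]
  -- σ3 : from k+1 variables, extracts the last entry
  have σ3ok : ∀ _j : Fin 1, (ATerm.var k).ok T (k + 1) := fun _ => Nat.lt_succ_self k
  have σ3eval : ∀ (x : Fin k → GP) (v : GP),
      (fun _j : Fin 1 => ATerm.eval (env (Fin.snoc x v)) (ATerm.var k)) = ![v] := by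
    intro x v
    funext j
    show env (Fin.snoc x v) k = ![v] j
    rw [env_snoc_last x v, Matrix.cons_val_fin_one]
  -- σ4 : from 1 variable, defines the (k+1)-tuples
  set σ4 : Fin (k + 1) → ATerm :=
    (Fin.snoc (fun j : Fin k => ATerm.app (a j) (ATerm.var 0)) (ATerm.var 0)) with hσ4
  have σ4ok : ∀ j, (σ4 j).ok T 1 := by
    refine Fin.lastCases ?_ ?_
    · rw [hσ4, Fin.snoc_last]; exact Nat.one_pos
    · intro j; rw [hσ4, Fin.snoc_castSucc]; exact ⟨haG j, Nat.one_pos⟩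
  have env1 : ∀ v : GP, env ![v] 0 = v := by
    intro v
    rw [env_lt _ Nat.one_pos, Matrix.cons_val_fin_one]
  have σ4eval : ∀ (v : GP) (x : Fin k → GP), (∀ j, fA (a j) v = x j) →
      (fun j => ATerm.eval (env ![v]) (σ4 j)) = Fin.snoc x v := by
    intro v x hx
    funext j
    refine Fin.lastCases ?_ ?_ j
    · rw [hσ4, Fin.snoc_last, Fin.snoc_last]
      show env ![v] 0 = v
      exact env1 v
    · intro j
      rw [hσ4, Fin.snoc_castSucc, Fin.snoc_castSucc]
      show fA (a j) (env ![v] 0) = x j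
      rw [env1 v]; exact hx j
  intro β
  have h12 : BF T β k a b →
      BF T β (k + 1) (Fin.snoc a (n, ∅)) (Fin.snoc b (fA (a i) (b i))) := by
    intro h
    have h2 := BF_map T β k (k + 1) σ1 σ1ok a b h
    rwa [σ1eval a (n, ∅) (by rw [haa]), σ1eval b (fA (a i) (b i)) rfl] at h2
  have h21 : BF T β (k + 1) (Fin.snoc a (n, ∅)) (Fin.snoc b (fA (a i) (b i))) →
      BF T β k a b := by
    intro h
    have h2 := BF_map T β (k + 1) k (fun j : Fin k => ATerm.var (j : ℕ)) σ2ok _ _ h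
    rwa [σ2eval a (n, ∅), σ2eval b (fA (a i) (b i))] at h2
  have h23 : BF T β (k + 1) (Fin.snoc a (n, ∅)) (Fin.snoc b (fA (a i) (b i))) →
      BF T β 1 ![((n, ∅) : GP)] ![fA (a i) (b i)] := by
    intro h
    have h2 := BF_map T β (k + 1) 1 (fun _ : Fin 1 => ATerm.var k) σ3ok _ _ h
    rwa [σ3eval a (n, ∅), σ3eval b (fA (a i) (b i))] at h2
  have h32 : BF T β 1 ![((n, ∅) : GP)] ![fA (a i) (b i)] →
      BF T β (k + 1) (Fin.snoc a (n, ∅)) (Fin.snoc b (fA (a i) (b i))) := by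
    intro h
    have h2 := BF_map T β 1 (k + 1) σ4 σ4ok _ _ h
    rwa [σ4eval (n, ∅) a hfix, σ4eval (fA (a i) (b i)) b hbj] at h2
  exact ⟨⟨h12, h21⟩, ⟨fun h => h23 (h12 h), fun h => h21 (h32 h)⟩⟩
end

section
/- If S is a set of ordinals of order type at most ω·m, S' is obtained from S by replacing each successor ordinal γ+1 ∈ S by γ (and keeping or removing the others), and B is a set of ordinals of order type at most ω, then S' ∪ B has order type at most ω·(m+1). -/
/-- The order type of a set of ordinals. -/
noncomputable def otype (S : Set Ordinal) : Ordinal :=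
  Ordinal.type (Subrel ((· < ·) : Ordinal → Ordinal → Prop) (· ∈ S))

open Ordinal Set

lemma otype_mono {X Y : Set Ordinal} (h : X ⊆ Y) : otype X ≤ otype Y := by
  refine RelEmbedding.ordinal_type_le (RelEmbedding.ofMonotone
    (fun x => (⟨x.1, h x.2⟩ : Y)) ?_)
  intro a b hab
  exact hab

/-- The part of `A` strictly below an element of `A` has smaller order type. -/
lemma otype_inter_Iio_lt {A : Set Ordinal} {z : Ordinal} (hz : z ∈ A) :
    otype (A ∩ Iio z) < otype A := by
  refine PrincipalSeg.ordinal_type_lt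
    ⟨RelEmbedding.ofMonotone (fun x => (⟨x.1, x.2.1⟩ : A)) ?_, ⟨z, hz⟩, ?_⟩
  · intro a b hab; exact hab
  · intro b
    constructor
    · rintro ⟨⟨a, ha⟩, rfl⟩
      exact ha.2
    · intro h
      exact ⟨⟨b.1, b.2, h⟩, Subtype.ext rfl⟩

lemma otype_le_of_strictMono_lt {A : Set Ordinal} {c : Ordinal}
    (f : A → Ordinal) (hf : ∀ a b : A, a.1 < b.1 → f a < f b)
    (hc : ∀ a, f a < c) : otype A ≤ c := by
  by_contra hlt
  push_neg at hlt
  have key : ∀ x : A, Ordinal.typein (Subrel ((· < ·) : Ordinal → Ordinal → Prop) (· ∈ A)) x ≤ f x := by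
    intro x
    induction x using IsWellFounded.induction
      (Subrel ((· < ·) : Ordinal → Ordinal → Prop) (· ∈ A)) with
    | ind x ih =>
      by_contra hfx
      push_neg at hfx
      have hfx' : f x < Ordinal.type (Subrel ((· < ·) : Ordinal → Ordinal → Prop) (· ∈ A)) :=
        lt_trans (hc x) hlt
      obtain ⟨y, hy⟩ := Ordinal.typein_surj (Subrel ((· < ·) : Ordinal → Ordinal → Prop) (· ∈ A)) hfx'
      rw [← hy] at hfx
      have hyx : Subrel ((· < ·) : Ordinal → Ordinal → Prop) (· ∈ A) y x :=
        (Ordinal.typein_lt_typein _).1 hfx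
      have := ih y hyx
      rw [hy] at this
      exact absurd (lt_of_le_of_lt this (hf y x hyx)) (lt_irrefl _)
  obtain ⟨x, hx⟩ := Ordinal.typein_surj (Subrel ((· < ·) : Ordinal → Ordinal → Prop) (· ∈ A)) hlt
  exact absurd (hx ▸ key x) (not_le.2 (hc x))

/-- A substitute for the natural sum `a ♯ b` when `b ≤ ω` (natural operations are no
longer in Mathlib). -/
noncomputable def hsum (a b : Ordinal) : Ordinal := if b < Ordinal.omega0 then a + b else Ordinal.omega0 + a

lemma omega0_add_mul_natCast (m : ℕ) :
    Ordinal.omega0 + Ordinal.omega0 * (m : Ordinal) = Ordinal.omega0 * (m + 1) := by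
  rw [show ((m : Ordinal) + 1) = 1 + m from by exact_mod_cast Nat.add_comm m 1, mul_add, mul_one]

lemma mul_natCast_add_omega0 (m : ℕ) :
    Ordinal.omega0 * (m : Ordinal) + Ordinal.omega0 = Ordinal.omega0 * (m + 1) := by
  rw [Ordinal.add_one_eq_succ, Ordinal.mul_succ]

lemma add_omega0_le_omega0_add (m : ℕ) : ∀ a < Ordinal.omega0 * m,
    a + Ordinal.omega0 ≤ Ordinal.omega0 + a := by
  induction m with
  | zero =>
    intro a ha
    simp at ha
  | succ m ih =>
    intro a ha
    push_cast at ha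
    by_cases h : a < Ordinal.omega0 * m
    · exact ih a h
    · push_neg at h
      have hr : a - Ordinal.omega0 * m < Ordinal.omega0 :=
        (Ordinal.sub_lt_of_le h).2 ((mul_natCast_add_omega0 m).symm ▸ ha)
      have ha' : a = Ordinal.omega0 * m + (a - Ordinal.omega0 * m) :=
        (Ordinal.add_sub_cancel_of_le h).symm
      calc a + Ordinal.omega0
          = Ordinal.omega0 * m + ((a - Ordinal.omega0 * m) + Ordinal.omega0) := by
            rw [← add_assoc, ← ha']
        _ = Ordinal.omega0 * m + Ordinal.omega0 := by rw [Ordinal.add_omega0 hr]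
        _ = Ordinal.omega0 + Ordinal.omega0 * m := by
            rw [mul_natCast_add_omega0, omega0_add_mul_natCast]
        _ ≤ Ordinal.omega0 + (Ordinal.omega0 * m + (a - Ordinal.omega0 * m)) :=
            add_le_add le_rfl le_self_add
        _ = Ordinal.omega0 + a := by rw [← ha']

lemma add_omega0_le_omega0_add' (m : ℕ) (a : Ordinal) (ha : a ≤ Ordinal.omega0 * m) :
    a + Ordinal.omega0 ≤ Ordinal.omega0 + a := by
  refine add_omega0_le_omega0_add (m + 1) a (ha.trans_lt ?_)
  push_cast
  rw [← mul_natCast_add_omega0]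
  exact lt_add_of_pos_right _ Ordinal.omega0_pos

lemma add_natCast_lt_add_natCast {a a' : Ordinal} (h : a < a') (n : ℕ) :
    a + n < a' + n := by
  calc a + n < a + (n + 1) := (add_lt_add_iff_left a).2 (by exact_mod_cast Nat.lt_succ_self n)
    _ = (a + 1) + n := by
        rw [add_assoc, show ((n : Ordinal) + 1) = 1 + n from by exact_mod_cast Nat.add_comm n 1]
    _ ≤ a' + n := add_le_add (by rw [Ordinal.add_one_eq_succ]; exact Order.succ_le_of_lt h) le_rfl

lemma hsum_lt_left {a a' b : Ordinal} (h : a < a') : hsum a b < hsum a' b := by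
  unfold hsum
  split_ifs with hb
  · obtain ⟨n, rfl⟩ := Ordinal.lt_omega0.1 hb
    exact add_natCast_lt_add_natCast h n
  · exact (add_lt_add_iff_left _).2 h

lemma hsum_lt_right (m : ℕ) {a a' b b' : Ordinal} (ha : a ≤ a') (hb : b < b')
    (hb' : b' ≤ Ordinal.omega0) (ham : a ≤ Ordinal.omega0 * m) : hsum a b < hsum a' b' := by
  have hbω : b < Ordinal.omega0 := hb.trans_le hb'
  unfold hsum
  rw [if_pos hbω]
  split_ifs with h'
  · calc a + b < a + b' := (add_lt_add_iff_left a).2 hb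
      _ ≤ a' + b' := add_le_add ha le_rfl
  · calc a + b < a + Ordinal.omega0 := (add_lt_add_iff_left a).2 hbω
      _ ≤ Ordinal.omega0 + a := add_omega0_le_omega0_add' m a ham
      _ ≤ Ordinal.omega0 + a' := add_le_add le_rfl ha

lemma hsum_lt_bound (m : ℕ) {a b : Ordinal} (ha : a ≤ Ordinal.omega0 * m)
    (h : a < Ordinal.omega0 * m ∨ b < Ordinal.omega0) :
    hsum a b < Ordinal.omega0 * (m + 1) := by
  unfold hsum
  split_ifs with hbω
  · calc a + b < a + Ordinal.omega0 := (add_lt_add_iff_left a).2 hbω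
      _ ≤ Ordinal.omega0 + a := add_omega0_le_omega0_add' m a ha
      _ ≤ Ordinal.omega0 + Ordinal.omega0 * m := add_le_add le_rfl ha
      _ = Ordinal.omega0 * (m + 1) := omega0_add_mul_natCast m
  · have : a < Ordinal.omega0 * m := h.resolve_right hbω
    calc Ordinal.omega0 + a < Ordinal.omega0 + Ordinal.omega0 * m := (add_lt_add_iff_left _).2 this
      _ = Ordinal.omega0 * (m + 1) := omega0_add_mul_natCast m

lemma otype_union_le (m : ℕ) (X Y : Set Ordinal) (hX : otype X ≤ Ordinal.omega0 * m)
    (hY : otype Y ≤ Ordinal.omega0) :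
    otype (X ∪ Y) ≤ Ordinal.omega0 * (m + 1) := by
  refine otype_le_of_strictMono_lt
    (fun z => hsum (otype (X ∩ Iio z.1)) (otype (Y ∩ Iio z.1))) ?_ ?_
  · rintro ⟨a, ha⟩ ⟨b, hb⟩ hab
    have hab' : a < b := hab
    have hXle : otype (X ∩ Iio a) ≤ otype (X ∩ Iio b) :=
      otype_mono (fun x hx => ⟨hx.1, lt_trans hx.2 hab'⟩)
    have hYle : otype (Y ∩ Iio a) ≤ otype (Y ∩ Iio b) :=
      otype_mono (fun x hx => ⟨hx.1, lt_trans hx.2 hab'⟩)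
    have hYb : otype (Y ∩ Iio b) ≤ Ordinal.omega0 := (otype_mono Set.inter_subset_left).trans hY
    have hXb : otype (X ∩ Iio b) ≤ Ordinal.omega0 * m := (otype_mono Set.inter_subset_left).trans hX
    rcases ha with ha | ha
    · have heq : (X ∩ Iio b) ∩ Iio a = X ∩ Iio a := by
        ext x
        simp only [Set.mem_inter_iff, Set.mem_Iio, and_assoc]
        exact ⟨fun h => ⟨h.1, h.2.2⟩, fun h => ⟨h.1, lt_trans h.2 hab', h.2⟩⟩
      have h1 : otype (X ∩ Iio a) < otype (X ∩ Iio b) := by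
        rw [← heq]
        exact otype_inter_Iio_lt ⟨ha, hab'⟩
      rcases hYle.lt_or_eq with h2 | h2
      · exact hsum_lt_right m h1.le h2 hYb (hXle.trans hXb)
      · show hsum _ _ < hsum _ _
        rw [h2]
        exact hsum_lt_left h1
    · have heq : (Y ∩ Iio b) ∩ Iio a = Y ∩ Iio a := by
        ext x
        simp only [Set.mem_inter_iff, Set.mem_Iio, and_assoc]
        exact ⟨fun h => ⟨h.1, h.2.2⟩, fun h => ⟨h.1, lt_trans h.2 hab', h.2⟩⟩
      have h1 : otype (Y ∩ Iio a) < otype (Y ∩ Iio b) := by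
        rw [← heq]
        exact otype_inter_Iio_lt ⟨ha, hab'⟩
      exact hsum_lt_right m hXle h1 hYb (hXle.trans hXb)
  · rintro ⟨a, ha | ha⟩
    · exact hsum_lt_bound m ((otype_mono Set.inter_subset_left).trans hX)
        (Or.inl ((otype_inter_Iio_lt ha).trans_le hX))
    · exact hsum_lt_bound m ((otype_mono Set.inter_subset_left).trans hX)
        (Or.inr ((otype_inter_Iio_lt ha).trans_le hY))

theorem stmt_18 (m : ℕ) (S S' B : Set Ordinal)
    (hS : otype S ≤ Ordinal.omega0 * m)
    (hS' : S' ⊆ {γ : Ordinal | γ + 1 ∈ S} ∪ {o : Ordinal | o ∈ S ∧ ∀ γ : Ordinal, o ≠ γ + 1})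
    (hB : otype B ≤ Ordinal.omega0) :
    otype (S' ∪ B) ≤ Ordinal.omega0 * (m + 1) := by
  classical
  have hS'le : otype S' ≤ otype S := by
    refine RelEmbedding.ordinal_type_le (RelEmbedding.ofMonotone
      (fun x : S' => if h : x.1 + 1 ∈ S then (⟨x.1 + 1, h⟩ : S)
        else ⟨x.1, ((hS' x.2).resolve_left h).1⟩) ?_)
    rintro ⟨a, ha⟩ ⟨b, hb⟩ hab
    have hab' : a < b := hab
    have hsucc : a + 1 ≤ b := by
      rw [Ordinal.add_one_eq_succ]
      exact Order.succ_le_of_lt hab'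
    show (dite _ _ _ : S).1 < (dite _ _ _ : S).1
    by_cases h1 : a + 1 ∈ S <;> by_cases h2 : b + 1 ∈ S <;>
      simp only [h1, h2, dif_pos, dif_neg, not_false_iff]
    · rw [Ordinal.add_one_eq_succ, Ordinal.add_one_eq_succ]
      exact Order.succ_lt_succ hab'
    · have hne := ((hS' hb).resolve_left h2).2
      exact lt_of_le_of_ne hsucc (fun e => hne a e.symm)
    · exact lt_trans hab' (lt_of_lt_of_le (lt_add_one b) le_rfl)
    · exact hab'
  exact otype_union_le m S' B (hS'le.trans hS) hB
end
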